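/- arXiv:1404.0496 — 4 statements merged into one kernel-verified Lean document; each statement's English description precedes it below -/
import Mathlib

section
/- Let G be a 2-connected finite simple graph with minimum degree δ, and let p be the number of vertices of a longest path in G. If p ≤ 2δ, then the circumference c of G satisfies c ≥ p (and consequently c = p = n, i.e., G is Hamiltonian). -/
/-!
Let `P = v₀ v₁ … vₙ` be a longest path, so `n + 1 = p`. Every neighbour of `v₀` or of `vₙ` lies
on `P`, hence each of the index sets `{i < n | v₀ ~ vᵢ₊₁}` and `{i < n | vᵢ ~ vₙ}` has at least
`δ` elements. As `2δ ≥ p > n`, they share an index `i`, and `v₀ … vᵢ vₙ vₙ₋₁ … vᵢ₊₁ v₀` is a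
cycle through the `p` vertices of `P`. A vertex off this cycle is impossible: by connectivity
some edge leaves the cycle, and opening the cycle at that edge gives a path with `p + 1`
vertices. So the cycle is Hamiltonian, and `c = p = n` because a cycle minus an edge is a path.
-/

open Finset

namespace SimpleGraph

variable {V : Type*} {G : SimpleGraph V}

section TwoConnected

variable [Fintype V]

lemma exists_ne_ne_of_three_le_card (hcard : 3 ≤ Fintype.card V) (a b : V) :
    ∃ c, c ≠ a ∧ c ≠ b := by
  classical
  obtain ⟨c, -, hc⟩ := exists_mem_notMem_of_card_lt_card (s := {a, b}) (t := univ)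
    (card_le_two.trans_lt (by rw [card_univ]; omega))
  simp only [mem_insert, mem_singleton, not_or] at hc
  exact ⟨c, hc⟩

variable (hcard : 3 ≤ Fintype.card V) (h2conn : ∀ v : V, (G.induce ({v}ᶜ : Set V)).Connected)
include hcard h2conn

lemma preconnected_of_forall_connected_induce_compl : G.Preconnected := by
  intro a b
  obtain ⟨c, hca, hcb⟩ := exists_ne_ne_of_three_le_card hcard a b
  exact ((h2conn c).preconnected ⟨a, hca.symm⟩ ⟨b, hcb.symm⟩).map (Embedding.induce _).toHom

lemma exists_adj_ne_of_forall_connected_induce_compl {x w : V} (hxw : x ≠ w) :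
    ∃ y, G.Adj x y ∧ y ≠ w := by
  obtain ⟨z, hzx, hzw⟩ := exists_ne_ne_of_three_le_card hcard x w
  obtain ⟨W⟩ := (h2conn w).preconnected ⟨x, hxw⟩ ⟨z, hzw⟩
  cases W with
  | nil => exact absurd rfl hzx
  | @cons _ y _ hadj _ => exact ⟨y, hadj, y.prop⟩

lemma two_le_minDegree_of_forall_connected_induce_compl [DecidableRel G.Adj] :
    2 ≤ G.minDegree := by
  have : Nontrivial V := Fintype.one_lt_card_iff_nontrivial.mp (by omega)
  refine le_minDegree_of_forall_le_degree _ _ fun x => ?_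
  obtain ⟨w, hw⟩ := exists_ne x
  obtain ⟨y₁, hy₁, -⟩ := exists_adj_ne_of_forall_connected_induce_compl hcard h2conn hw.symm
  obtain ⟨y₂, hy₂, hne⟩ := exists_adj_ne_of_forall_connected_induce_compl hcard h2conn hy₁.ne
  rw [← card_neighborFinset_eq_degree]
  exact one_lt_card.mpr ⟨y₂, by simpa using hy₂, y₁, by simpa using hy₁, hne⟩

end TwoConnected

lemma degree_le_card_filter_of_forall_adj [DecidableRel G.Adj] {x : V}
    [Fintype (G.neighborSet x)] (f : ℕ → V) (s : Finset ℕ)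
    (h : ∀ y, G.Adj x y → ∃ i ∈ s, f i = y) :
    G.degree x ≤ #{i ∈ s | G.Adj x (f i)} := by
  rw [← card_neighborFinset_eq_degree]
  refine card_le_card_of_surjOn f fun y hy => ?_
  have hxy : G.Adj x y := by simpa using hy
  obtain ⟨i, hi, rfl⟩ := h y hxy
  exact ⟨i, by simpa [hi] using hxy, rfl⟩

namespace Walk

variable {u v : V}

lemma IsPath.isCycle_cons {p : G.Walk v u} (hp : p.IsPath) (h : G.Adj u v)
    (hlen : 2 ≤ p.length) : (cons h p).IsCycle :=
  isCycle_iff_isPath_tail_and_le_length.mpr ⟨by simpa using hp, by simp; omega⟩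

section PosaRotation

def posaRotation (p : G.Walk u v) (i : ℕ) (h : G.Adj (p.getVert i) v) :
    G.Walk u (p.getVert (i + 1)) :=
  (p.take i).append (cons h (p.drop (i + 1)).reverse)

variable {p : G.Walk u v} {i : ℕ}

lemma lt_length_of_adj_getVert (h : G.Adj (p.getVert i) v) : i < p.length := by
  by_contra! hi
  exact h.ne (p.getVert_of_length_le hi)

lemma length_posaRotation (h : G.Adj (p.getVert i) v) :
    (p.posaRotation i h).length = p.length := by
  have := lt_length_of_adj_getVert h
  simp only [posaRotation, length_append, length_cons, length_reverse, take_length, drop_length]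
  omega

lemma support_posaRotation_perm (h : G.Adj (p.getVert i) v) :
    (p.posaRotation i h).support.Perm p.support := by
  have hmin : (i + 1) ⊓ p.length = i + 1 := by have := lt_length_of_adj_getVert h; omega
  rw [posaRotation, support_append, support_cons, List.tail_cons, support_reverse,
    support_take, drop_support_eq_support_drop_min, hmin]
  conv_rhs => rw [← List.take_append_drop (i + 1) p.support]
  exact (List.reverse_perm _).append_left _

lemma IsPath.posaRotation (hp : p.IsPath) (h : G.Adj (p.getVert i) v) :
    (p.posaRotation i h).IsPath :=
  IsPath.mk' ((support_posaRotation_perm h).nodup_iff.mpr hp.support_nodup)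

end PosaRotation

lemma IsCycle.exists_isPath_length_eq_of_notMem_support (hG : G.Preconnected)
    {C : G.Walk u u} (hC : C.IsCycle) {z : V} (hz : z ∉ C.support) :
    ∃ (a b : V) (q : G.Walk a b), q.IsPath ∧ q.length = C.length := by
  classical
  obtain ⟨W⟩ := hG u z
  obtain ⟨d, -, hd, hd'⟩ := W.exists_boundary_dart {x | x ∈ C.support} C.start_mem_support hz
  set C' := C.rotate d.fst hd
  have hC' : C'.IsCycle := hC.rotate hd
  have hdC' : d.snd ∉ C'.tail.support := fun h => hd' <|
    (mem_support_rotate_iff C _ hd).mp (cons_support_tail hC'.not_nil ▸ List.mem_cons_of_mem _ h)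
  refine ⟨_, _, C'.tail.concat d.adj, hC'.isPath_tail.concat hdC' d.adj, ?_⟩
  rw [length_concat, length_tail_add_one hC'.not_nil, length_rotate]

lemma IsCycle.isHamiltonianCycle_of_forall_mem_support [DecidableEq V] {C : G.Walk u u}
    (hC : C.IsCycle) (h : ∀ w, w ∈ C.support) : C.IsHamiltonianCycle := by
  refine ⟨hC, hC.isPath_tail.isHamiltonian_of_mem fun w => ?_⟩
  rw [support_tail_of_not_nil _ hC.not_nil]
  rcases (mem_support_iff C).mp (h w) with rfl | hw
  · exact end_mem_tail_support hC.not_nil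
  · exact hw

section LongestPath

variable {p : G.Walk u v} (hp : p.IsPath)
  (hmax : ∀ (a b : V) (q : G.Walk a b), q.IsPath → q.length ≤ p.length)
include hp hmax

lemma IsPath.mem_support_of_adj_start {y : V} (h : G.Adj u y) : y ∈ p.support := by
  by_contra hy
  have := hmax _ _ _ (hp.cons hy (h := h.symm))
  simp at this

lemma IsPath.mem_support_of_adj_end {y : V} (h : G.Adj v y) : y ∈ p.support := by
  simpa using hp.reverse.mem_support_of_adj_start (by simpa using hmax) h

variable [DecidableRel G.Adj] [G.LocallyFinite]

lemma IsPath.degree_start_le :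
    G.degree u ≤ #{i ∈ range p.length | G.Adj u (p.getVert (i + 1))} := by
  refine degree_le_card_filter_of_forall_adj _ _ fun y hy => ?_
  obtain ⟨j, rfl, hj⟩ := mem_support_iff_exists_getVert.mp (hp.mem_support_of_adj_start hmax hy)
  obtain ⟨i, rfl⟩ : ∃ i, j = i + 1 := Nat.exists_eq_add_one.mpr <| Nat.pos_of_ne_zero <| by
    rintro rfl
    exact hy.ne (getVert_zero p).symm
  exact ⟨i, mem_range.mpr (by omega), rfl⟩

lemma IsPath.degree_end_le :
    G.degree v ≤ #{i ∈ range p.length | G.Adj v (p.getVert i)} := by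
  refine degree_le_card_filter_of_forall_adj _ _ fun y hy => ?_
  obtain ⟨j, rfl, hj⟩ := mem_support_iff_exists_getVert.mp (hp.mem_support_of_adj_end hmax hy)
  refine ⟨j, mem_range.mpr (lt_of_le_of_ne hj ?_), rfl⟩
  rintro rfl
  exact hy.ne (getVert_length p).symm

lemma IsPath.exists_crossing (hdeg : p.length < G.degree u + G.degree v) :
    ∃ i, G.Adj u (p.getVert (i + 1)) ∧ G.Adj (p.getVert i) v := by
  have hu := hp.degree_start_le hmax
  have hv := hp.degree_end_le hmax
  obtain ⟨i, hi⟩ := inter_nonempty_of_card_lt_card_add_card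
    (filter_subset (fun i => G.Adj u (p.getVert (i + 1))) (range p.length))
    (filter_subset (fun i => G.Adj v (p.getVert i)) _) (by rw [card_range]; omega)
  simp only [mem_inter, mem_filter] at hi
  exact ⟨i, hi.1.2, hi.2.2.symm⟩

lemma IsPath.exists_isCycle_length_eq_add_one (hdeg : p.length < G.degree u + G.degree v)
    (hu : 2 ≤ G.degree u) : ∃ C : G.Walk u u, C.IsCycle ∧ C.length = p.length + 1 := by
  obtain ⟨i, hu', hv'⟩ := hp.exists_crossing hmax hdeg
  have hlen : 2 ≤ p.length :=
    hu.trans <| (hp.degree_start_le hmax).trans <| (card_filter_le _ _).trans (card_range _).le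
  refine ⟨cons hu' (p.posaRotation i hv').reverse, (hp.posaRotation hv').reverse.isCycle_cons _ ?_,
    ?_⟩
  · rwa [length_reverse, length_posaRotation]
  · rw [length_cons, length_reverse, length_posaRotation]

end LongestPath

end Walk

end SimpleGraph

open SimpleGraph

/-- If `G` is a 2-connected finite simple graph whose longest path
has `p` vertices and `p ≤ 2δ`, then the circumference `c` satisfies `c ≥ p`; in this
case `c = p = n` and `G` is Hamiltonian. -/
theorem stmt_0 {V : Type*} [Fintype V] [DecidableEq V] (G : SimpleGraph V) [DecidableRel G.Adj]
    (hcard : 3 ≤ Fintype.card V)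
    (h2conn : ∀ v : V, (G.induce ({v}ᶜ : Set V)).Connected)
    (p c : ℕ)
    (hp : ∃ (u v : V) (P : G.Walk u v), P.IsPath ∧ P.length + 1 = p)
    (hpmax : ∀ (u v : V) (P : G.Walk u v), P.IsPath → P.length + 1 ≤ p)
    (hc : ∃ (u : V) (C : G.Walk u u), C.IsCycle ∧ C.length = c)
    (hcmax : ∀ (u : V) (C : G.Walk u u), C.IsCycle → C.length ≤ c)
    (hple : p ≤ 2 * G.minDegree) :
    p ≤ c ∧ c = p ∧ p = Fintype.card V ∧ G.IsHamiltonian := by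
  obtain ⟨u, v, P, hP, rfl⟩ := hp
  have hmax : ∀ (a b : V) (q : G.Walk a b), q.IsPath → q.length ≤ P.length :=
    fun a b q hq => Nat.le_of_succ_le_succ (hpmax a b q hq)
  have hδ := two_le_minDegree_of_forall_connected_induce_compl hcard h2conn
  have hdu := G.minDegree_le_degree u
  have hdv := G.minDegree_le_degree v
  obtain ⟨C, hC, hClen⟩ := hP.exists_isCycle_length_eq_add_one hmax (by omega) (by omega)
  have hCham : C.IsHamiltonianCycle := hC.isHamiltonianCycle_of_forall_mem_support fun z => by
    by_contra hz
    obtain ⟨a, b, q, hq, hqlen⟩ := hC.exists_isPath_length_eq_of_notMem_support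
      (preconnected_of_forall_connected_induce_compl hcard h2conn) hz
    have := hmax a b q hq
    omega
  have hcp : c ≤ P.length + 1 := by
    obtain ⟨w, C₀, hC₀, rfl⟩ := hc
    have := hmax _ _ _ hC₀.isPath_tail
    have := Walk.length_tail_add_one hC₀.not_nil
    omega
  have hpc := hcmax u C hC
  refine ⟨hpc.trans_eq' hClen, by omega, ?_, fun _ => ⟨u, C, hCham⟩⟩
  rw [← hCham.length_eq, hClen]
end

section
/- Let G be a 2-connected finite simple graph, let p be the number of vertices of a longest path in G, and let c be the circumference of G. Then c > √(2p). -/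
/-!
Index the vertices of a path `P` by their position along `P`. If a walk leaves `P` at `x` and
first returns to it at `z`, it closes up with the segment of `P` between `x` and `z` to a cycle,
so the positions of `x` and `z` differ by at most `c - 1`. Hence a walk of length `ℓ` between two
vertices of `P` moves along `P` by at most `(c - 1) ℓ` positions. By 2-connectivity the ends of
`P` lie on a common cycle (Whitney's ear argument); its two arcs join the ends of `P` and have
total length at most `c`, so `2 (p - 1) ≤ (c - 1) c`, which gives `2 p < c²` as `c ≥ 3`.
-/

open SimpleGraph

namespace SimpleGraph.Walk

variable {V : Type*} {G : SimpleGraph V} {u v w x y : V}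

lemma IsPath.start_notMem_support_tail {p : G.Walk u v} (hp : p.IsPath) :
    u ∉ p.support.tail := by
  have h := hp.support_nodup
  rw [← cons_tail_support] at h
  exact (List.nodup_cons.mp h).1

lemma IsPath.append_of_forall_mem {p : G.Walk u v} {q : G.Walk v w} (hp : p.IsPath)
    (hq : q.IsPath) (h : ∀ t ∈ p.support, t ∈ q.support → t = v) : (p.append q).IsPath := by
  rw [isPath_def, support_append, List.nodup_append]
  refine ⟨hp.support_nodup, hq.support_nodup.sublist (List.tail_sublist _), ?_⟩
  rintro t htp _ htq rfl
  exact hq.start_notMem_support_tail (h t htp (List.mem_of_mem_tail htq) ▸ htq)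

lemma exists_eq_append_of_end_mem (S : Set V) (W : G.Walk u v) (hv : v ∈ S) :
    ∃ z ∈ S, ∃ (W₁ : G.Walk u z) (W₂ : G.Walk z v),
      W = W₁.append W₂ ∧ ∀ t ∈ W₁.support, t ∈ S → t = z := by
  induction W with
  | nil => exact ⟨_, hv, nil, nil, rfl, by simp⟩
  | @cons u _ _ h W ih =>
    by_cases hu : u ∈ S
    · exact ⟨u, hu, nil, cons h W, rfl, by simp⟩
    · obtain ⟨z, hz, W₁, W₂, rfl, hW₁⟩ := ih hv
      refine ⟨z, hz, cons h W₁, W₂, rfl, ?_⟩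
      rintro t (_ | ⟨_, ht⟩) htS
      · exact absurd htS hu
      · exact hW₁ t ht htS

/-- `Q` and `R` are the two arcs of a cycle through `u` and `v`. -/
structure IsCycleSplit (Q : G.Walk u v) (R : G.Walk v u) : Prop where
  isPath_left : Q.IsPath
  isPath_right : R.IsPath
  eq_or_eq_of_mem : ∀ t ∈ Q.support, t ∈ R.support → t = u ∨ t = v
  three_le_length : 3 ≤ Q.length + R.length

namespace IsCycleSplit

variable {Q : G.Walk u v} {R : G.Walk v u}

lemma ne (h : IsCycleSplit Q R) : u ≠ v := by
  rintro rfl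
  have := h.three_le_length
  have hQ := (isPath_iff_nil.mp h.isPath_left).length_eq_zero
  have hR := (isPath_iff_nil.mp h.isPath_right).length_eq_zero
  omega

lemma symm (h : IsCycleSplit Q R) : IsCycleSplit R.reverse Q.reverse where
  isPath_left := h.isPath_right.reverse
  isPath_right := h.isPath_left.reverse
  eq_or_eq_of_mem t htR htQ := by
    rw [support_reverse, List.mem_reverse] at htR htQ
    exact h.eq_or_eq_of_mem t htQ htR
  three_le_length := by simpa [add_comm] using h.three_le_length

lemma isCycle (h : IsCycleSplit Q R) : (Q.append R).IsCycle := by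
  refine h.isPath_left.isCycle_append h.isPath_right (fun t htQ htR => ?_) ?_
  · rcases h.eq_or_eq_of_mem t (List.mem_of_mem_tail htQ) (List.mem_of_mem_tail htR) with rfl | rfl
    · exact h.isPath_left.start_notMem_support_tail htQ
    · exact h.isPath_right.start_notMem_support_tail htR
  · have := h.three_le_length
    omega

lemma extend [DecidableEq V] (h : IsCycleSplit Q R) (hvy : G.Adj v y) (hyR : y ∉ R.support)
    (hxQ : x ∈ Q.support) (hxv : x ≠ v) {F : G.Walk y x} (hF : F.IsPath)
    (hFQR : ∀ t ∈ F.support, t ∈ Q.support ∨ t ∈ R.support → t = x) :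
    IsCycleSplit ((Q.takeUntil x hxQ).append F.reverse) (cons hvy.symm R) where
  isPath_left := by
    refine (h.isPath_left.takeUntil hxQ).append_of_forall_mem hF.reverse fun t ht htF => ?_
    rw [support_reverse, List.mem_reverse] at htF
    exact hFQR t htF (.inl (support_takeUntil_subset_support _ _ ht))
  isPath_right := (cons_isPath_iff _ _).mpr ⟨h.isPath_right, hyR⟩
  eq_or_eq_of_mem t ht ht' := by
    rw [mem_support_append_iff, support_reverse, List.mem_reverse] at ht
    rw [support_cons, List.mem_cons] at ht'
    rcases ht' with rfl | htR
    · exact .inr rfl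
    left
    rcases ht with htQ | htF
    · refine (h.eq_or_eq_of_mem t (support_takeUntil_subset_support _ _ htQ) htR).resolve_right ?_
      rintro rfl
      exact endpoint_notMem_support_takeUntil h.isPath_left hxQ hxv.symm htQ
    · obtain rfl := hFQR t htF (.inr htR)
      exact (h.eq_or_eq_of_mem t hxQ htR).resolve_right hxv
  three_le_length := by
    have huy : u ≠ y := fun huy => hyR (huy ▸ R.end_mem_support)
    have h₁ := not_nil_iff_lt_length.mp
      (not_nil_of_ne (p := (Q.takeUntil x hxQ).append F.reverse) huy)
    have h₂ := not_nil_iff_lt_length.mp (not_nil_of_ne (p := R) h.ne.symm)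
    rw [length_cons]
    omega

end IsCycleSplit

lemma IsCycle.isCycleSplit [DecidableEq V] {D : G.Walk u u} (hD : D.IsCycle)
    (hv : v ∈ D.support) (hvu : v ≠ u) :
    IsCycleSplit (D.takeUntil v hv) (D.dropUntil v hv) := by
  have hspec := D.take_spec hv
  have hnodup := hD.support_nodup
  rw [← hspec, tail_support_append] at hnodup
  refine ⟨hD.isPath_takeUntil hv, ?_, fun t htQ htR => ?_, ?_⟩
  · exact (hspec ▸ hD).isPath_of_append_right (not_nil_of_ne hvu.symm)
  · rw [← cons_tail_support, List.mem_cons] at htQ htR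
    rcases htQ with rfl | htQ
    · exact .inl rfl
    rcases htR with rfl | htR
    · exact .inr rfl
    exact absurd htR (List.disjoint_of_nodup_append hnodup htQ)
  · rw [← length_append, hspec]
    exact hD.three_le_length

end SimpleGraph.Walk

namespace SimpleGraph

variable {V : Type*} {G : SimpleGraph V} [DecidableEq V]

lemma exists_isPath_notMem_support (h2 : ∀ v : V, (G.induce ({v}ᶜ : Set V)).Connected)
    {a b z : V} (ha : a ≠ z) (hb : b ≠ z) :
    ∃ W : G.Walk a b, W.IsPath ∧ z ∉ W.support := by
  obtain ⟨W⟩ := (h2 z).preconnected ⟨a, ha⟩ ⟨b, hb⟩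
  refine ⟨(W.map (Embedding.induce _).toHom).bypass, Walk.bypass_isPath _, fun hz => ?_⟩
  obtain ⟨⟨t, ht⟩, -, htz⟩ :=
    List.mem_map.mp (Walk.support_map _ _ ▸ Walk.support_bypass_subset_support _ hz)
  exact ht htz

lemma exists_adj_ne [Fintype V] (hcard : 3 ≤ Fintype.card V)
    (h2 : ∀ v : V, (G.induce ({v}ᶜ : Set V)).Connected) {u v : V} (huv : u ≠ v) :
    ∃ x, G.Adj u x ∧ x ≠ v := by
  obtain ⟨z, hzu, hzv⟩ := ENat.exists_ne_ne_of_three_le (by simpa using hcard) u v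
  obtain ⟨W, -, hvW⟩ := exists_isPath_notMem_support h2 huv hzv
  have hW : ¬W.Nil := Walk.not_nil_of_ne hzu.symm
  exact ⟨W.snd, W.adj_snd hW, fun h => hvW (h ▸ W.getVert_mem_support 1)⟩

lemma exists_isCycle_of_adj [Fintype V] (hcard : 3 ≤ Fintype.card V)
    (h2 : ∀ v : V, (G.induce ({v}ᶜ : Set V)).Connected) {u v : V}
    (huv : G.Adj u v) : ∃ D : G.Walk u u, D.IsCycle ∧ v ∈ D.support := by
  obtain ⟨x, hux, hxv⟩ := exists_adj_ne hcard h2 huv.ne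
  obtain ⟨W, hW, huW⟩ := exists_isPath_notMem_support h2 hux.ne.symm huv.ne.symm
  have hWlen := Walk.not_nil_iff_lt_length.mp (Walk.not_nil_of_ne (p := W) hxv)
  have hsplit : Walk.IsCycleSplit huv.toWalk (Walk.cons hux W).reverse :=
    ⟨by simp [huv.ne], ((Walk.cons_isPath_iff _ _).mpr ⟨hW, huW⟩).reverse,
      fun t ht _ => by simpa using ht,
      by simp only [Adj.toWalk, Walk.length_cons, Walk.length_reverse, Walk.length_nil]; omega⟩
  exact ⟨_, hsplit.isCycle, by simp⟩

lemma exists_isCycle_of_isCycle_of_adj (h2 : ∀ v : V, (G.induce ({v}ᶜ : Set V)).Connected)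
    {u v w : V} {D : G.Walk u u} (hD : D.IsCycle)
    (hwD : w ∈ D.support) (hwu : w ≠ u) (hwv : G.Adj w v) :
    ∃ D' : G.Walk u u, D'.IsCycle ∧ v ∈ D'.support := by
  by_cases hvD : v ∈ D.support
  · exact ⟨D, hD, hvD⟩
  obtain ⟨F, hF, hwF⟩ := exists_isPath_notMem_support h2 hwv.ne.symm hwu.symm
  obtain ⟨x, hxD, F₁, F₂, rfl, hF₁⟩ :=
    F.exists_eq_append_of_end_mem {t | t ∈ D.support} D.start_mem_support
  have hxw : x ≠ w := fun hxw =>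
    hwF ((Walk.mem_support_append_iff _ _).mpr (.inl (hxw ▸ F₁.end_mem_support)))
  have hmemD : ∀ t, t ∈ D.support ↔
      t ∈ (D.takeUntil w hwD).support ∨ t ∈ (D.dropUntil w hwD).support := by
    intro t
    conv_lhs => rw [← D.take_spec hwD]
    exact Walk.mem_support_append_iff _ _
  have hvQR : v ∉ (D.takeUntil w hwD).support ∧ v ∉ (D.dropUntil w hwD).support := by
    simpa [not_or, hmemD] using hvD
  -- `F₁` is an ear from `v` to `D` avoiding `w`; swapping the arcs of `D` if necessary, it
  -- lands on the arc `u → w`.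
  have hsplit := hD.isCycleSplit hwD hwu
  rcases (hmemD x).mp hxD with hxQ | hxR
  · refine ⟨_, (hsplit.extend hwv hvQR.2 hxQ hxw hF.of_append_left ?_).isCycle, by simp⟩
    exact fun t ht htD => hF₁ t ht ((hmemD t).mpr htD)
  · refine ⟨_, (hsplit.symm.extend hwv (by simpa using hvQR.1) (by simpa using hxR) hxw
      hF.of_append_left ?_).isCycle, by simp⟩
    intro t ht htD
    exact hF₁ t ht ((hmemD t).mpr (by simpa [or_comm] using htD))

theorem exists_isCycle_mem_support [Fintype V] (hcard : 3 ≤ Fintype.card V)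
    (h2 : ∀ v : V, (G.induce ({v}ᶜ : Set V)).Connected) {u v : V}
    (huv : u ≠ v) : ∃ D : G.Walk u u, D.IsCycle ∧ v ∈ D.support := by
  obtain ⟨z, hzu, hzv⟩ := ENat.exists_ne_ne_of_three_le (by simpa using hcard) u v
  obtain ⟨W, -, -⟩ := exists_isPath_notMem_support h2 hzv.symm hzu.symm
  clear hzu hzv
  induction W with
  | nil => exact absurd rfl huv
  | @cons v w u hvw W ih =>
    by_cases hwu : w = u
    · subst hwu
      exact exists_isCycle_of_adj hcard h2 hvw.symm
    · obtain ⟨D, hD, hwD⟩ := ih (Ne.symm hwu)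
      exact exists_isCycle_of_isCycle_of_adj h2 hD hwD hwu hvw.symm

end SimpleGraph

namespace SimpleGraph.Walk

variable {V : Type*} {G : SimpleGraph V} [DecidableEq V] {a b : V} {P : G.Walk a b} {c : ℕ}

lemma idxOf_start (P : G.Walk a b) : P.support.idxOf a = 0 := by
  rw [← cons_tail_support]
  exact List.idxOf_cons_self

lemma IsPath.idxOf_end (hP : P.IsPath) : P.support.idxOf b = P.length := by
  have hle := P.length_takeUntil_le_length P.end_mem_support
  have hdrop := P.length_dropUntil P.end_mem_support
  rw [(isPath_iff_nil.mp (hP.dropUntil P.end_mem_support)).length_eq_zero] at hdrop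
  rw [length_takeUntil] at hle
  omega

lemma IsPath.exists_isPath_length_eq_idxOf_sub (hP : P.IsPath) {x z : V} (hx : x ∈ P.support)
    (hz : z ∈ P.support) (hxz : P.support.idxOf x ≤ P.support.idxOf z) :
    ∃ T : G.Walk x z, T.IsPath ∧ T.support ⊆ P.support ∧
      T.length = P.support.idxOf z - P.support.idxOf x := by
  have hx' : x ∈ (P.takeUntil z hz).support := by
    rw [takeUntil_eq_take, support_copy, support_take, List.mem_take_iff_idxOf_lt hx]
    omega
  refine ⟨_, (hP.takeUntil hz).dropUntil hx', fun t ht => support_takeUntil_subset_support _ _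
    (support_dropUntil_subset_support _ _ ht), ?_⟩
  rw [length_dropUntil, length_takeUntil, ← length_takeUntil _ hx', takeUntil_takeUntil,
    length_takeUntil]

lemma IsPath.idxOf_le_add_of_forall_mem (hc : 2 ≤ c)
    (hcyc : ∀ (z : V) (D : G.Walk z z), D.IsCycle → D.length ≤ c) (hP : P.IsPath) {x z : V}
    (hx : x ∈ P.support) (hz : z ∈ P.support) (W : G.Walk x z)
    (hW : ∀ t ∈ W.support, t ∈ P.support → t = x ∨ t = z) :
    P.support.idxOf z ≤ P.support.idxOf x + (c - 1) := by
  by_cases hzx : P.support.idxOf z ≤ P.support.idxOf x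
  · omega
  obtain ⟨T, hT, hTP, hTlen⟩ := hP.exists_isPath_length_eq_idxOf_sub hx hz (by omega)
  by_cases hT1 : T.length ≤ 1
  · omega
  have hxz : x ≠ z := by rintro rfl; exact hzx le_rfl
  have hB := not_nil_iff_lt_length.mp (not_nil_of_ne (p := W.bypass) hxz)
  have hsplit : IsCycleSplit T W.bypass.reverse := by
    refine ⟨hT, (bypass_isPath W).reverse, fun t htT htB => ?_, by rw [length_reverse]; omega⟩
    rw [support_reverse, List.mem_reverse] at htB
    exact hW t (support_bypass_subset_support _ htB) (hTP htT)
  have := hcyc x _ hsplit.isCycle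
  rw [length_append, length_reverse] at this
  omega

lemma IsPath.idxOf_le_add_mul_length (hc : 2 ≤ c)
    (hcyc : ∀ (z : V) (D : G.Walk z z), D.IsCycle → D.length ≤ c) (hP : P.IsPath) {s t : V}
    (hs : s ∈ P.support) (ht : t ∈ P.support) (W : G.Walk s t) :
    P.support.idxOf t ≤ P.support.idxOf s + (c - 1) * W.length := by
  induction hn : W.length using Nat.strong_induction_on generalizing s with
  | _ n ih =>
  cases W with
  | nil => simp
  | cons hsy W =>
    obtain ⟨z, hzP, F₁, F₂, rfl, hF₁⟩ :=
      W.exists_eq_append_of_end_mem {t | t ∈ P.support} ht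
    have hjump := idxOf_le_add_of_forall_mem hc hcyc hP hs hzP (cons hsy F₁) (by
      rintro t' (_ | ⟨_, ht'⟩) ht'P
      · exact .inl rfl
      · exact .inr (hF₁ t' ht' ht'P))
    rw [length_cons, length_append] at hn
    have hrest := ih F₂.length (by omega) hzP F₂ rfl
    nlinarith

theorem IsPath.two_mul_length_le [Fintype V] (hcard : 3 ≤ Fintype.card V)
    (h2 : ∀ v : V, (G.induce ({v}ᶜ : Set V)).Connected)
    (hcyc : ∀ (z : V) (D : G.Walk z z), D.IsCycle → D.length ≤ c) (hP : P.IsPath) :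
    2 * P.length ≤ (c - 1) * c := by
  rcases eq_or_ne a b with rfl | hab
  · simp [(isPath_iff_nil.mp hP).length_eq_zero]
  obtain ⟨D, hD, hbD⟩ := exists_isCycle_mem_support hcard h2 hab
  have hDc := hcyc a D hD
  have hc : 2 ≤ c := by have := hD.three_le_length; omega
  have hQR := congrArg length (D.take_spec hbD)
  rw [length_append] at hQR
  have hQ := hP.idxOf_le_add_mul_length hc hcyc P.start_mem_support P.end_mem_support
    (D.takeUntil b hbD)
  have hR := hP.idxOf_le_add_mul_length hc hcyc P.start_mem_support P.end_mem_support
    (D.dropUntil b hbD).reverse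
  rw [idxOf_start, hP.idxOf_end] at hQ hR
  rw [length_reverse] at hR
  calc 2 * P.length
      ≤ (c - 1) * ((D.takeUntil b hbD).length + (D.dropUntil b hbD).length) := by
        rw [mul_add]; omega
    _ ≤ (c - 1) * c := Nat.mul_le_mul_left _ (hQR ▸ hDc)

end SimpleGraph.Walk

theorem stmt_3_general {V : Type*} [Fintype V] (G : SimpleGraph V)
    (hcard : 3 ≤ Fintype.card V)
    (h2conn : ∀ v : V, (G.induce ({v}ᶜ : Set V)).Connected)
    (p c : ℕ)
    (hp : ∃ (u v : V) (P : G.Walk u v), P.IsPath ∧ P.length + 1 = p)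
    (hc : ∃ (u : V) (C : G.Walk u u), C.IsCycle ∧ C.length = c)
    (hcmax : ∀ (u : V) (C : G.Walk u u), C.IsCycle → C.length ≤ c) :
    Real.sqrt (2 * (p : ℝ)) < (c : ℝ) := by
  classical
  obtain ⟨_, _, P, hP, rfl⟩ := hp
  obtain ⟨_, C, hC, rfl⟩ := hc
  have h3 := hC.three_le_length
  have hkey := hP.two_mul_length_le hcard h2conn hcmax
  have hlt : 2 * (P.length + 1) < C.length ^ 2 := by
    zify [show 1 ≤ C.length by omega] at hkey ⊢
    nlinarith
  rw [Real.sqrt_lt' (by positivity)]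
  exact_mod_cast hlt

/-- If `G` is a 2-connected finite simple graph whose longest path
has `p` vertices, then the circumference `c` satisfies `c > √(2p)`. -/
theorem stmt_3 {V : Type*} [Fintype V] (G : SimpleGraph V)
    (hcard : 3 ≤ Fintype.card V)
    (h2conn : ∀ v : V, (G.induce ({v}ᶜ : Set V)).Connected)
    (p c : ℕ)
    (hp : ∃ (u v : V) (P : G.Walk u v), P.IsPath ∧ P.length + 1 = p)
    (hpmax : ∀ (u v : V) (P : G.Walk u v), P.IsPath → P.length + 1 ≤ p)
    (hc : ∃ (u : V) (C : G.Walk u u), C.IsCycle ∧ C.length = c)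
    (hcmax : ∀ (u : V) (C : G.Walk u u), C.IsCycle → C.length ≤ c) :
    Real.sqrt (2 * (p : ℝ)) < (c : ℝ) :=
  stmt_3_general G hcard h2conn p c hp hc hcmax
end

section
/- Let G be a finite simple graph, let P be a longest path in G, and suppose {L₁, L₂, ..., L_m} is a vine on P consisting of m paths. Then the circumference c of G satisfies c ≥ (2p − 10)/(m + 1) + 4, where p is the number of vertices of P. -/
/-!
Let the rungs `L₁, …, Lₘ` of the vine join the vertices of `P` at positions `aᵢ < bᵢ`.
Each rung together with the stretch `P[aᵢ, bᵢ]` is a cycle of length `≥ bᵢ - aᵢ + 1`, and the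
rungs `Lₛ, …, Lⱼ` linked by the stretches `P[aₛ, aₛ₊₁]`, `P[bₖ, aₖ₊₂]` and `P[bⱼ₋₁, bⱼ]` form a
zigzag cycle. For `m ≥ 4`, two copies of the zigzag through all rungs, the zigzag through
`L₂, …, Lₘ₋₁` and the rung cycles of `L₂, …, Lₘ₋₁` are `m + 1` cycles which together cover
every edge of `P` at least twice and use at least `4m - 4` rung edges, so
`(m + 1) c ≥ 2 (p - 1) + 4m - 4`.
For `m ≤ 3` a few of these cycles suffice.
-/

open SimpleGraph

/-- A vine `{L₁, …, Lₘ}` on a path `P = x…y` of a graph `G`: a family of `m ≥ 1`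
pairwise internally-disjoint nontrivial paths `Lᵢ : xᵢ → yᵢ` meeting `P` exactly in
their endpoints, whose endpoints sit on `P` at positions `ix i` (for `xᵢ`) and
`iy i` (for `yᵢ`) satisfying
`x = x₁ ≺ x₂ ≺ y₁ ⪯ x₃ ≺ y₂ ⪯ x₄ ≺ … ⪯ xₘ ≺ y_{m−1} ≺ yₘ = y` along `P`. -/
structure Vine {V : Type*} (G : SimpleGraph V) {x y : V} (P : G.Walk x y)
    (m : ℕ) : Prop where
  pos : 0 < m
  ex : ∃ (X Y : Fin m → V) (ix iy : Fin m → ℕ) (L : ∀ i : Fin m, G.Walk (X i) (Y i)),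
    (∀ i, (L i).IsPath) ∧
    -- each `Lᵢ` has at least two vertices
    (∀ i, X i ≠ Y i) ∧
    -- `xᵢ` and `yᵢ` lie on `P` at positions `ix i` and `iy i`
    (∀ i, P.support[ix i]? = some (X i)) ∧
    (∀ i, P.support[iy i]? = some (Y i)) ∧
    -- `Lᵢ` meets `P` exactly in `{xᵢ, yᵢ}`
    (∀ i, ∀ v ∈ (L i).support, v ∈ P.support → v = X i ∨ v = Y i) ∧
    -- the paths are pairwise internally disjoint
    (∀ i j, i ≠ j → ∀ v ∈ (L i).support, v ∈ (L j).support →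
      (v = X i ∨ v = Y i) ∧ (v = X j ∨ v = Y j)) ∧
    -- `x₁ = x` and `yₘ = y`
    (ix ⟨0, pos⟩ = 0) ∧
    (iy ⟨m - 1, by omega⟩ = P.length) ∧
    -- `x₁ ≺ x₂` (when `m ≥ 2`)
    (∀ h : 1 < m, ix ⟨0, pos⟩ < ix ⟨1, h⟩) ∧
    -- `x_{i+1} ≺ y_i`
    (∀ (i : Fin m) (h : (i : ℕ) + 1 < m), ix ⟨(i : ℕ) + 1, h⟩ < iy i) ∧
    -- `y_i ⪯ x_{i+2}`
    (∀ (i : Fin m) (h : (i : ℕ) + 2 < m), iy i ≤ ix ⟨(i : ℕ) + 2, h⟩) ∧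
    -- `y_{m−1} ≺ yₘ` (when `m ≥ 2`)
    (∀ h : 1 < m, iy ⟨m - 2, by omega⟩ < iy ⟨m - 1, by omega⟩)


namespace SimpleGraph.Walk

variable {V : Type*} {G : SimpleGraph V}

lemma IsPath.append_of_support_inter {u v w : V} {p : G.Walk u v} {q : G.Walk v w}
    (hp : p.IsPath) (hq : q.IsPath) (h : ∀ z ∈ p.support, z ∈ q.support → z = v) :
    (p.append q).IsPath := by
  have hq' := hq.support_nodup
  rw [← q.cons_tail_support, List.nodup_cons] at hq'
  rw [isPath_def, support_append, List.nodup_append]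
  refine ⟨hp.support_nodup, hq'.2, fun z hzp z' hzq hzz' => ?_⟩
  subst hzz'
  exact hq'.1 (h z hzp (List.mem_of_mem_tail hzq) ▸ hzq)

lemma IsPath.isCycle_append_of_support_inter {u v : V} {p : G.Walk u v} {q : G.Walk v u}
    (hp : p.IsPath) (hq : q.IsPath) (h : ∀ z ∈ p.support, z ∈ q.support → z = u ∨ z = v)
    (hn : 1 < p.length ∨ 1 < q.length) : (p.append q).IsCycle := by
  have hp' := hp.support_nodup
  have hq' := hq.support_nodup
  rw [← p.cons_tail_support, List.nodup_cons] at hp'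
  rw [← q.cons_tail_support, List.nodup_cons] at hq'
  refine hp.isCycle_append hq (fun z hzp hzq => ?_) hn
  rcases h z (List.mem_of_mem_tail hzp) (List.mem_of_mem_tail hzq) with rfl | rfl
  · exact hp'.1 hzp
  · exact hq'.1 hzq

def segment {u v : V} (p : G.Walk u v) (i j : ℕ) (hij : i ≤ j) :
    G.Walk (p.getVert i) (p.getVert j) :=
  ((p.drop i).take (j - i)).copy rfl (by simp [Nat.add_sub_cancel' hij])

lemma length_segment {u v : V} (p : G.Walk u v) {i j : ℕ} (hij : i ≤ j) (hj : j ≤ p.length) :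
    (p.segment i j hij).length = j - i := by
  simp [segment]
  omega

lemma IsPath.segment {u v : V} {p : G.Walk u v} (hp : p.IsPath) {i j : ℕ} (hij : i ≤ j) :
    (p.segment i j hij).IsPath := by
  simpa [Walk.segment] using (hp.drop i).take (j - i)

lemma exists_of_mem_support_segment {u v z : V} (p : G.Walk u v) {i j : ℕ} (hij : i ≤ j)
    (hz : z ∈ (p.segment i j hij).support) : ∃ k, i ≤ k ∧ k ≤ j ∧ p.getVert k = z := by
  obtain ⟨t, rfl, -⟩ := mem_support_iff_exists_getVert.1 hz
  exact ⟨i + min (j - i) t, by omega, by omega, by simp [segment]⟩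

end SimpleGraph.Walk

open SimpleGraph Finset

lemma sum_Ico_sub_add_sum_Ico_sub (a b : ℕ → ℤ) {j : ℕ} (hj : 1 ≤ j) :
    ∑ k ∈ Ico 1 (j + 2), (b k - a k) + ∑ k ∈ Ico 1 j, (a (k + 2) - b k) =
      b (j + 1) + b j - a 1 - a 2 := by
  induction j, hj using Nat.le_induction with
  | base => simp [sum_Ico_succ_top]; ring
  | succ j hj ih =>
    rw [sum_Ico_succ_top (by omega), sum_Ico_succ_top hj]
    linarith

lemma SimpleGraph.le_of_exists_isCycle {V : Type*} {G : SimpleGraph V} {c : ℕ}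
    (hc : ∀ (u : V) (C : G.Walk u u), C.IsCycle → C.length ≤ c) {b : ℤ}
    (h : ∃ (u : V) (C : G.Walk u u), C.IsCycle ∧ b ≤ C.length) : b ≤ c := by
  obtain ⟨u, C, hC, hb⟩ := h
  exact hb.trans (by exact_mod_cast hc u C hC)

section VineOn

variable {V : Type*} {G : SimpleGraph V} {x y : V}

/-- A vine on the path `P` whose `k`-th rung `L k` joins the vertices of `P` at positions
`A k` and `B k`; only the rungs with `k < m` are constrained. -/
structure IsVineOn (P : G.Walk x y) (m : ℕ) (A B : ℕ → ℕ)
    (L : ∀ k, G.Walk (P.getVert (A k)) (P.getVert (B k))) : Prop where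
  isPath_P : P.IsPath
  pos : 0 < m
  isPath : ∀ k < m, (L k).IsPath
  inter_P : ∀ k < m, ∀ v ∈ (L k).support, v ∈ P.support →
    v = P.getVert (A k) ∨ v = P.getVert (B k)
  inter_L : ∀ k < m, ∀ l < m, k ≠ l → ∀ v ∈ (L k).support, v ∈ (L l).support →
    v = P.getVert (A k) ∨ v = P.getVert (B k)
  A_zero : A 0 = 0
  B_last : B (m - 1) = P.length
  A_zero_lt : 1 < m → A 0 < A 1
  A_succ_lt : ∀ k, k + 1 < m → A (k + 1) < B k
  B_le_A : ∀ k, k + 2 < m → B k ≤ A (k + 2)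
  B_lt_last : 1 < m → B (m - 2) < B (m - 1)

namespace IsVineOn

variable {P : G.Walk x y} {m : ℕ} {A B : ℕ → ℕ}
  {L : ∀ k, G.Walk (P.getVert (A k)) (P.getVert (B k))}

lemma B_lt_succ (hV : IsVineOn P m A B L) {k : ℕ} (hk : k + 1 < m) : B k < B (k + 1) := by
  rcases lt_or_ge (k + 2) m with h | h
  · exact (hV.B_le_A k h).trans_lt (hV.A_succ_lt (k + 1) h)
  · obtain rfl : m = k + 2 := by omega
    exact hV.B_lt_last (by omega)

lemma A_lt_succ (hV : IsVineOn P m A B L) {k : ℕ} (hk : k + 1 < m) : A k < A (k + 1) := by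
  cases k with
  | zero => exact hV.A_zero_lt hk
  | succ k => exact (hV.A_succ_lt k (by omega)).trans_le (hV.B_le_A k hk)

lemma B_mono (hV : IsVineOn P m A B L) {k l : ℕ} (hkl : k ≤ l) (hl : l < m) : B k ≤ B l := by
  induction hkl with
  | refl => rfl
  | step _ ih => exact (ih (by omega)).trans (hV.B_lt_succ hl).le

lemma A_mono (hV : IsVineOn P m A B L) {k l : ℕ} (hkl : k ≤ l) (hl : l < m) : A k ≤ A l := by
  induction hkl with
  | refl => rfl
  | step _ ih => exact (ih (by omega)).trans (hV.A_lt_succ hl).le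

lemma add_two_le_B (hV : IsVineOn P m A B L) (hm : 1 < m) {k : ℕ} (hk : k < m) :
    A k + 2 ≤ B k := by
  rcases lt_or_ge (k + 1) m with h | h
  · have := hV.A_lt_succ h
    have := hV.A_succ_lt k h
    omega
  · obtain rfl : k = m - 1 := by omega
    have := hV.A_succ_lt (m - 2) (by omega)
    rw [show m - 2 + 1 = m - 1 by omega] at this
    have := hV.B_lt_last hm
    omega

lemma B_le_length (hV : IsVineOn P m A B L) {k : ℕ} (hk : k < m) : B k ≤ P.length :=
  hV.B_last ▸ hV.B_mono (by omega) (by omega)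

lemma A_le_length (hV : IsVineOn P m A B L) {k : ℕ} (hk : k < m) : A k ≤ P.length := by
  rcases Nat.lt_or_ge 1 m with hm | hm
  · have := hV.add_two_le_B hm hk
    have := hV.B_le_length hk
    omega
  · obtain rfl : k = 0 := by omega
    simp [hV.A_zero]

lemma eq_of_getVert_eq (hV : IsVineOn P m A B L) {i j : ℕ} (hi : i ≤ P.length)
    (hj : j ≤ P.length) (h : P.getVert i = P.getVert j) : i = j :=
  hV.isPath_P.getVert_injOn hi hj h

lemma eq_of_getVert_mem_rung (hV : IsVineOn P m A B L) {i k : ℕ} (hi : i ≤ P.length)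
    (hk : k < m) (h : P.getVert i ∈ (L k).support) : i = A k ∨ i = B k :=
  (hV.inter_P k hk _ h (P.getVert_mem_support i)).imp
    (hV.eq_of_getVert_eq hi (hV.A_le_length hk)) (hV.eq_of_getVert_eq hi (hV.B_le_length hk))

lemma le_of_getVert_mem_segment (hV : IsVineOn P m A B L) {i a b : ℕ} (hab : a ≤ b)
    (hi : i ≤ P.length) (hb : b ≤ P.length) (h : P.getVert i ∈ (P.segment a b hab).support) :
    a ≤ i ∧ i ≤ b := by
  obtain ⟨l, hal, hlb, hl⟩ := P.exists_of_mem_support_segment hab h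
  obtain rfl := hV.eq_of_getVert_eq (by omega) hi hl
  exact ⟨hal, hlb⟩

lemma mem_P_of_mem_two_rungs (hV : IsVineOn P m A B L) {k l : ℕ} (hk : k < m) (hl : l < m)
    (hkl : k ≠ l) {v : V} (hvk : v ∈ (L k).support) (hvl : v ∈ (L l).support) :
    v ∈ P.support := by
  rcases hV.inter_L k hk l hl hkl v hvk hvl with rfl | rfl <;> exact P.getVert_mem_support _

lemma length_pos (hV : IsVineOn P m A B L) {k : ℕ} (hk : k < m) (h : A k < B k) :
    0 < (L k).length := by
  refine Nat.pos_of_ne_zero fun h0 => h.ne ?_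
  exact hV.eq_of_getVert_eq (hV.A_le_length hk) (hV.B_le_length hk)
    ((L k).eq_of_length_eq_zero h0)

lemma exists_isCycle_rung (hV : IsVineOn P m A B L) {k : ℕ} (hk : k < m)
    (h2 : A k + 2 ≤ B k) :
    ∃ (u : V) (C : G.Walk u u), C.IsCycle ∧ (B k : ℤ) - A k + 1 ≤ C.length := by
  have hAB : A k ≤ B k := by omega
  have hseg := P.length_segment hAB (hV.B_le_length hk)
  have hL := hV.length_pos hk (by omega)
  refine ⟨_, (P.segment _ _ hAB).append (L k).reverse, ?_, ?_⟩
  · refine (hV.isPath_P.segment hAB).isCycle_append_of_support_inter (hV.isPath k hk).reverse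
      (fun z hzP hzL => ?_) (by omega)
    rw [Walk.support_reverse, List.mem_reverse] at hzL
    obtain ⟨i, -, -, rfl⟩ := P.exists_of_mem_support_segment hAB hzP
    exact hV.inter_P k hk _ hzL (P.getVert_mem_support _)
  · rw [Walk.length_append, Walk.length_reverse, hseg]
    omega

lemma isPath_rung_append (hV : IsVineOn P m A B L) (hm : 1 < m) {p r : ℕ} {w : V}
    (hr : r < m) (hpr : p ≤ A r) {W : G.Walk (P.getVert p) w} (hW : W.IsPath)
    (hpos : ∀ i ≤ P.length, P.getVert i ∈ W.support → i ≤ p ∨ A r < i ∧ i < B r)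
    (hoff : ∀ v ∈ W.support, v ∉ P.support → ∃ k < m, k ≠ r ∧ v ∈ (L k).support) :
    ((L r).reverse.append ((P.segment p (A r) hpr).reverse.append W)).IsPath := by
  have hAr := hV.A_le_length hr
  have hAB := hV.add_two_le_B hm hr
  have hSW : ((P.segment p (A r) hpr).reverse.append W).IsPath := by
    refine (hV.isPath_P.segment hpr).reverse.append_of_support_inter hW fun z hzS hzW => ?_
    rw [Walk.support_reverse, List.mem_reverse] at hzS
    obtain ⟨i, hpi, hir, rfl⟩ := P.exists_of_mem_support_segment hpr hzS
    obtain rfl : i = p := by have := hpos i (by omega) hzW; omega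
    rfl
  refine (hV.isPath r hr).reverse.append_of_support_inter hSW fun z hzL hzSW => ?_
  rw [Walk.support_reverse, List.mem_reverse] at hzL
  rw [Walk.mem_support_append_iff, Walk.support_reverse, List.mem_reverse] at hzSW
  by_cases hzP : z ∈ P.support
  · obtain ⟨i, rfl, hi⟩ := Walk.mem_support_iff_exists_getVert.1 hzP
    rcases hV.eq_of_getVert_mem_rung hi hr hzL with rfl | rfl
    · rfl
    · exfalso
      rcases hzSW with hzS | hzW
      · have := hV.le_of_getVert_mem_segment hpr hi hAr hzS
        omega
      · have := hpos _ hi hzW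
        omega
  · exfalso
    rcases hzSW with hzS | hzW
    · obtain ⟨i, -, -, rfl⟩ := P.exists_of_mem_support_segment hpr hzS
      exact hzP (P.getVert_mem_support i)
    · obtain ⟨k, hk, hkr, hzk⟩ := hoff z hzW hzP
      exact hzP (hV.mem_P_of_mem_two_rungs hr hk hkr.symm hzL hzk)

lemma sum_gap_nonneg (hV : IsVineOn P m A B L) {s j : ℕ} (hj : j + 1 < m) :
    0 ≤ ∑ k ∈ Ico s j, ((A (k + 2) : ℤ) - B k) :=
  sum_nonneg fun k hk => by
    have := hV.B_le_A k (by simp at hk; omega)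
    omega

end IsVineOn

variable (P : G.Walk x y) (A B : ℕ → ℕ) (L : ∀ k, G.Walk (P.getVert (A k)) (P.getVert (B k)))

/-- The zigzag path through the rungs `s, …, j + 1` and the stretches of `P` from `A s` to
`A (s + 1)` and from `B k` to `A (k + 2)`, recorded only through the properties needed to
extend it by one rung and to close it into a cycle with the stretch from `B j` to `B (j + 1)`. -/
structure IsZigzag (s j : ℕ) (T : G.Walk (P.getVert (B (j + 1))) (P.getVert (B j))) : Prop where
  isPath : T.IsPath
  pos : ∀ i ≤ P.length, P.getVert i ∈ T.support →
    A s ≤ i ∧ i ≤ A (j + 1) ∨ i = B j ∨ i = B (j + 1)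
  off : ∀ v ∈ T.support, v ∉ P.support → ∃ k, s ≤ k ∧ k ≤ j + 1 ∧ v ∈ (L k).support
  length_ge : (j : ℤ) - s + 2 + (A (s + 1) - A s) + ∑ k ∈ Ico s j, ((A (k + 2) : ℤ) - B k) ≤
    T.length

variable {P A B L} {m : ℕ}

namespace IsVineOn

lemma exists_isZigzag_self (hV : IsVineOn P m A B L) {s : ℕ} (hs : s + 1 < m) :
    ∃ T, IsZigzag P A B L s s T := by
  have hm : 1 < m := by omega
  have h1 := hV.A_lt_succ hs
  have h2 := hV.A_succ_lt s hs
  have h3 := hV.B_lt_succ hs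
  have hA := hV.A_le_length hs
  have hseg := P.length_segment h1.le hA
  have hL0 := hV.length_pos (k := s) (by omega) (by omega)
  have hL1 := hV.length_pos hs (by omega)
  refine ⟨(L (s + 1)).reverse.append ((P.segment (A s) (A (s + 1)) h1.le).reverse.append (L s)),
    ⟨?_, fun i hi hiT => ?_, fun v hv hvP => ?_, ?_⟩⟩
  · refine hV.isPath_rung_append hm hs h1.le (hV.isPath s (by omega)) (fun i hi hiL => ?_)
      fun v hv hvP => ⟨s, by omega, by omega, hv⟩
    rcases hV.eq_of_getVert_mem_rung hi (by omega) hiL with rfl | rfl <;> omega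
  · simp only [Walk.mem_support_append_iff, Walk.support_reverse, List.mem_reverse] at hiT
    rcases hiT with hiT | hiT | hiT
    · rcases hV.eq_of_getVert_mem_rung hi hs hiT with rfl | rfl <;> omega
    · have := hV.le_of_getVert_mem_segment h1.le hi hA hiT
      omega
    · rcases hV.eq_of_getVert_mem_rung hi (by omega) hiT with rfl | rfl <;> omega
  · simp only [Walk.mem_support_append_iff, Walk.support_reverse, List.mem_reverse] at hv
    rcases hv with hv | hv | hv
    · exact ⟨s + 1, by omega, le_rfl, hv⟩
    · obtain ⟨i, -, -, rfl⟩ := P.exists_of_mem_support_segment h1.le hv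
      exact absurd (P.getVert_mem_support i) hvP
    · exact ⟨s, le_rfl, by omega, hv⟩
  · simp only [Walk.length_append, Walk.length_reverse, hseg, Ico_self, sum_empty]
    push_cast [h1.le]
    omega

lemma exists_isZigzag_succ (hV : IsVineOn P m A B L) {s j : ℕ}
    {T : G.Walk (P.getVert (B (j + 1))) (P.getVert (B j))} (hT : IsZigzag P A B L s j T)
    (hsj : s ≤ j) (hj : j + 2 < m) : ∃ T', IsZigzag P A B L s (j + 1) T' := by
  have hm : 1 < m := by omega
  have h1 := hV.B_le_A j hj
  have h2 := hV.A_succ_lt j (by omega)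
  have h3 : A (j + 2) < B (j + 1) := hV.A_succ_lt (j + 1) hj
  have h4 : B (j + 1) < B (j + 2) := hV.B_lt_succ hj
  have h5 := hV.A_mono (k := s) (l := j + 1) (by omega) (by omega)
  have hA := hV.A_le_length hj
  have hseg := P.length_segment h1 hA
  have hL := hV.length_pos hj (by have := hV.add_two_le_B hm hj; omega)
  refine ⟨(L (j + 2)).reverse.append ((P.segment (B j) (A (j + 2)) h1).reverse.append T.reverse),
    ⟨?_, fun i hi hiT => ?_, fun v hv hvP => ?_, ?_⟩⟩
  · refine hV.isPath_rung_append hm hj h1 hT.isPath.reverse (fun i hi hiT => ?_)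
      fun v hv hvP => ?_
    · rw [Walk.support_reverse, List.mem_reverse] at hiT
      have := hT.pos i hi hiT
      omega
    · rw [Walk.support_reverse, List.mem_reverse] at hv
      obtain ⟨k, -, hk, hvk⟩ := hT.off v hv hvP
      exact ⟨k, by omega, by omega, hvk⟩
  · rw [show j + 1 + 1 = j + 2 from rfl]
    simp only [Walk.mem_support_append_iff, Walk.support_reverse, List.mem_reverse] at hiT
    rcases hiT with hiT | hiT | hiT
    · have := hV.A_mono (k := s) (l := j + 2) (by omega) hj
      rcases hV.eq_of_getVert_mem_rung hi hj hiT with rfl | rfl <;> omega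
    · have := hV.le_of_getVert_mem_segment h1 hi hA hiT
      omega
    · have := hT.pos i hi hiT
      omega
  · simp only [Walk.mem_support_append_iff, Walk.support_reverse, List.mem_reverse] at hv
    rcases hv with hv | hv | hv
    · exact ⟨j + 2, by omega, le_rfl, hv⟩
    · obtain ⟨i, -, -, rfl⟩ := P.exists_of_mem_support_segment h1 hv
      exact absurd (P.getVert_mem_support i) hvP
    · obtain ⟨k, hsk, hk, hvk⟩ := hT.off v hv hvP
      exact ⟨k, hsk, by omega, hvk⟩
  · have hT' := hT.length_ge
    simp only [Walk.length_append, Walk.length_reverse, hseg]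
    rw [sum_Ico_succ_top hsj]
    push_cast [h1]
    omega

lemma exists_isZigzag (hV : IsVineOn P m A B L) {s j : ℕ} (hsj : s ≤ j) (hj : j + 1 < m) :
    ∃ T, IsZigzag P A B L s j T := by
  induction j, hsj using Nat.le_induction with
  | base => exact hV.exists_isZigzag_self hj
  | succ j hsj ih =>
    obtain ⟨T, hT⟩ := ih (by omega)
    exact hV.exists_isZigzag_succ hT hsj hj

lemma exists_isCycle_zigzag (hV : IsVineOn P m A B L) {s j : ℕ} (hsj : s ≤ j)
    (hj : j + 1 < m) :
    ∃ (u : V) (C : G.Walk u u), C.IsCycle ∧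
      (j : ℤ) - s + 2 + (A (s + 1) - A s) + ∑ k ∈ Ico s j, ((A (k + 2) : ℤ) - B k) +
        (B (j + 1) - B j) ≤ C.length := by
  obtain ⟨T, hT⟩ := hV.exists_isZigzag hsj hj
  have h1 := hV.B_lt_succ hj
  have h2 := hV.A_succ_lt j hj
  have h3 := hV.A_lt_succ (k := s) (by omega)
  have hB := hV.B_le_length hj
  have hseg := P.length_segment h1.le hB
  have hT2 : 1 < T.length := by
    have := hT.length_ge
    have := hV.sum_gap_nonneg (s := s) hj
    omega
  refine ⟨_, T.append (P.segment (B j) (B (j + 1)) h1.le), ?_, ?_⟩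
  · refine hT.isPath.isCycle_append_of_support_inter (hV.isPath_P.segment h1.le)
      (fun z hzT hzS => ?_) (Or.inl hT2)
    obtain ⟨i, hji, hij, rfl⟩ := P.exists_of_mem_support_segment h1.le hzS
    rcases hT.pos i (by omega) hzT with h | rfl | rfl
    · omega
    · exact Or.inr rfl
    · exact Or.inl rfl
  · have := hT.length_ge
    rw [Walk.length_append, hseg]
    push_cast [h1.le]
    omega

lemma two_mul_length_add_le_of_four_le (hV : IsVineOn P m A B L) (hm : 4 ≤ m) {c : ℕ}
    (hc : ∀ (u : V) (C : G.Walk u u), C.IsCycle → C.length ≤ c) :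
    2 * (P.length + 1) + 4 * m ≤ (m + 1) * c + 6 := by
  obtain ⟨m, rfl⟩ : ∃ m', m = m' + 4 := ⟨m - 4, by omega⟩
  have hlast : B (m + 3) = P.length := hV.B_last
  have hZ0 := le_of_exists_isCycle hc
    (hV.exists_isCycle_zigzag (s := 0) (j := m + 2) (by omega) (by omega))
  have hZ1 := le_of_exists_isCycle hc
    (hV.exists_isCycle_zigzag (s := 1) (j := m + 1) (by omega) (by omega))
  have hrungs : ∑ k ∈ Ico 1 (m + 3), ((B k : ℤ) - A k + 1) ≤ (m + 2) * c := by
    have := sum_le_card_nsmul (Ico 1 (m + 3)) _ _ fun k hk =>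
      le_of_exists_isCycle hc (hV.exists_isCycle_rung (k := k) (by simp at hk; omega)
        (hV.add_two_le_B (by omega) (by simp at hk; omega)))
    simpa using this
  have htele := sum_Ico_sub_add_sum_Ico_sub (fun k => (A k : ℤ)) (fun k => (B k : ℤ))
    (j := m + 1) (by omega)
  have hgap := hV.sum_gap_nonneg (s := 0) (j := m + 2) (by omega)
  rw [sum_add_distrib, sum_const, Nat.card_Ico, nsmul_eq_mul] at hrungs
  simp only [hV.A_zero, hlast] at hZ0
  simp only [add_assoc, Nat.reduceAdd] at htele hZ1
  push_cast at hZ0 hZ1 hrungs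
  zify
  linarith

lemma two_mul_length_add_le (hV : IsVineOn P m A B L) {c : ℕ} (hc3 : 3 ≤ c)
    (hc : ∀ (u : V) (C : G.Walk u u), C.IsCycle → C.length ≤ c) :
    2 * (P.length + 1) + 4 * m ≤ (m + 1) * c + 6 := by
  rcases le_or_gt 4 m with hm | hm
  · exact hV.two_mul_length_add_le_of_four_le hm hc
  have hpos := hV.pos
  have hA0 := hV.A_zero
  have hlast := hV.B_last
  interval_cases m <;> norm_num at hlast
  · rcases le_or_gt P.length 2 with hn | hn
    · omega
    have := le_of_exists_isCycle hc (hV.exists_isCycle_rung (k := 0) (by omega) (by omega))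
    omega
  · have h0 := hV.A_zero_lt (by omega)
    have h1 := hV.A_succ_lt 0 (by omega)
    have hC0 := le_of_exists_isCycle hc
      (hV.exists_isCycle_rung (k := 0) (by omega) (hV.add_two_le_B (by omega) (by omega)))
    have hC1 := le_of_exists_isCycle hc
      (hV.exists_isCycle_rung (k := 1) (by omega) (hV.add_two_le_B (by omega) (by omega)))
    have hZ := le_of_exists_isCycle hc
      (hV.exists_isCycle_zigzag (s := 0) (j := 0) le_rfl (by omega))
    simp only [Ico_self, sum_empty, zero_add] at hZ
    omega
  · have h1 : B 0 ≤ A 2 := hV.B_le_A 0 (by omega)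
    have hC1 := le_of_exists_isCycle hc
      (hV.exists_isCycle_rung (k := 1) (by omega) (hV.add_two_le_B (by omega) (by omega)))
    have hZ := le_of_exists_isCycle hc
      (hV.exists_isCycle_zigzag (s := 0) (j := 1) (by omega) (by omega))
    simp only [Nat.Ico_succ_singleton, sum_singleton, zero_add, Nat.reduceAdd] at hZ
    omega

end IsVineOn

end VineOn

lemma Vine.exists_isVineOn {V : Type*} {G : SimpleGraph V} {x y : V} {P : G.Walk x y}
    (hP : P.IsPath) {m : ℕ} (hvine : Vine G P m) :
    ∃ (A B : ℕ → ℕ) (L : ∀ k, G.Walk (P.getVert (A k)) (P.getVert (B k))),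
      IsVineOn P m A B L := by
  obtain ⟨X, Y, ix, iy, L, hL, -, hX, hY, hLP, hLL, h0, hlast, h01, hxy, hyx, hyy⟩ := hvine.ex
  have hm := hvine.pos
  have getVert_eq {n : ℕ} {v : V} (h : P.support[n]? = some v) : P.getVert n = v := by
    obtain ⟨hn, rfl⟩ := List.getElem?_eq_some_iff.1 h
    exact (P.support_getElem_eq_getVert hn).symm
  let A k := if h : k < m then ix ⟨k, h⟩ else 0
  let B k := if h : k < m then iy ⟨k, h⟩ else 0
  have hA k (h : k < m) : A k = ix ⟨k, h⟩ := dif_pos h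
  have hB k (h : k < m) : B k = iy ⟨k, h⟩ := dif_pos h
  have hXA k (h : k < m) : X ⟨k, h⟩ = P.getVert (A k) := by rw [hA k h, getVert_eq (hX _)]
  have hYB k (h : k < m) : Y ⟨k, h⟩ = P.getVert (B k) := by rw [hB k h, getVert_eq (hY _)]
  let L' k : G.Walk (P.getVert (A k)) (P.getVert (B k)) :=
    if h : k < m then (L ⟨k, h⟩).copy (hXA k h) (hYB k h)
    else (Walk.nil : G.Walk (P.getVert 0) _).copy (by simp [A, h]) (by simp [B, h])
  have hL' k (h : k < m) : (L' k).support = (L ⟨k, h⟩).support := by simp [L', h]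
  refine ⟨A, B, L', ⟨hP, hm, fun k hk => ?_, fun k hk v hv hvP => ?_,
    fun k hk l hl hkl v hvk hvl => ?_, ?_, ?_, fun h => ?_, fun k hk => ?_, fun k hk => ?_,
    fun h => ?_⟩⟩
  · simpa [L', hk] using hL ⟨k, hk⟩
  · rw [hL' k hk] at hv
    simpa [hXA, hYB] using hLP ⟨k, hk⟩ v hv hvP
  · rw [hL' k hk] at hvk
    rw [hL' l hl] at hvl
    simpa [hXA, hYB] using (hLL ⟨k, hk⟩ ⟨l, hl⟩ (by simpa [Fin.ext_iff]) v hvk hvl).1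
  · rw [hA 0 hm, h0]
  · rw [hB _ (by omega), hlast]
  · rw [hA 0 hm, hA 1 h]
    exact h01 h
  · rw [hA _ hk, hB _ (by omega)]
    exact hxy ⟨k, by omega⟩ hk
  · rw [hA _ hk, hB _ (by omega)]
    exact hyx ⟨k, by omega⟩ hk
  · rw [hB _ (by omega), hB _ (by omega)]
    exact hyy h

theorem stmt_7_general {V : Type*} (G : SimpleGraph V)
    (x y : V) (P : G.Walk x y) (hP : P.IsPath)
    (p c : ℕ) (hp : p = P.length + 1)
    (hc : ∃ (u : V) (C : G.Walk u u), C.IsCycle ∧ C.length = c)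
    (hcmax : ∀ (u : V) (C : G.Walk u u), C.IsCycle → C.length ≤ c)
    (m : ℕ) (hvine : Vine G P m) :
    (2 * (p : ℝ) - 10) / ((m : ℝ) + 1) + 4 ≤ (c : ℝ) := by
  obtain ⟨A, B, L, hV⟩ := hvine.exists_isVineOn hP
  have hc3 : 3 ≤ c := by
    obtain ⟨u, C, hC, rfl⟩ := hc
    exact hC.three_le_length
  have key : (2 * p + 4 * m : ℝ) ≤ (m + 1) * c + 6 := by
    exact_mod_cast hp ▸ hV.two_mul_length_add_le hc3 hcmax
  rw [div_add' _ _ _ (by positivity), div_le_iff₀ (by positivity)]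
  linarith

/-- **Lemma 2.** If a finite simple graph `G` has a longest path `P`
with `p` vertices carrying a vine of `m` paths, then the circumference `c`
satisfies `c ≥ (2p − 10)/(m + 1) + 4`. -/
theorem stmt_7 {V : Type*} [Fintype V] (G : SimpleGraph V)
    (x y : V) (P : G.Walk x y) (hP : P.IsPath)
    (hPmax : ∀ (u v : V) (Q : G.Walk u v), Q.IsPath → Q.length ≤ P.length)
    (p c : ℕ) (hp : p = P.length + 1)
    (hc : ∃ (u : V) (C : G.Walk u u), C.IsCycle ∧ C.length = c)
    (hcmax : ∀ (u : V) (C : G.Walk u u), C.IsCycle → C.length ≤ c)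
    (m : ℕ) (hvine : Vine G P m) :
    (2 * (p : ℝ) - 10) / ((m : ℝ) + 1) + 4 ≤ (c : ℝ) :=
  stmt_7_general G x y P hP p c hp hc hcmax m hvine
end

section
/- For every integer δ ≥ 2, the graph G = K₂ + 3K_{δ−1}, obtained as the join of the complete graph K₂ with the disjoint union of three copies of the complete graph K_{δ−1}, has n = 3δ − 1 vertices, minimum degree δ, contains a Hamilton path (so p = n = 3δ − 1), and has circumference c = 2δ. -/
/-!
The Hamilton path runs through the three cliques one after another, with the two vertices of
`K₂` as bridges; leaving out the third clique gives a cycle through the remaining `2δ` vertices.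
Conversely, a cycle meeting all three cliques must leave each of them, and it can only leave a
clique into `K₂`. Exits from different cliques are different darts of the cycle, so they end at
different vertices, which is impossible since `K₂` has only two. Hence every cycle avoids a
whole clique and has at most `2δ` vertices.
-/

open SimpleGraph

/-- The join `A + B` of two graphs: disjoint copies of `A` and `B` together with
all edges between them. -/
def graphJoin {α β : Type*} (A : SimpleGraph α) (B : SimpleGraph β) :
    SimpleGraph (α ⊕ β) where
  Adj u v :=
    match u, v with
    | Sum.inl a, Sum.inl a' => A.Adj a a'
    | Sum.inr b, Sum.inr b' => B.Adj b b'
    | Sum.inl _, Sum.inr _ => True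
    | Sum.inr _, Sum.inl _ => True
  symm := ⟨by rintro (a | b) (a' | b') h <;> simp_all <;> exact h.symm⟩
  loopless := ⟨by rintro (a | b) h <;> simp_all⟩

/-- `3K_k`: the disjoint union of three copies of the complete graph `K_k`. -/
def threeCliques (k : ℕ) : SimpleGraph (Fin 3 × Fin k) where
  Adj u v := u.1 = v.1 ∧ u.2 ≠ v.2
  symm := ⟨by rintro ⟨i, a⟩ ⟨j, b⟩ ⟨h1, h2⟩; exact ⟨h1.symm, h2.symm⟩⟩
  loopless := ⟨by rintro ⟨i, a⟩ ⟨-, h⟩; exact h rfl⟩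

namespace List

theorem IsChain.cons_of_forall_mem {α : Type*} {R : α → α → Prop} {l : List α} {x : α}
    (h : l.IsChain R) (hx : ∀ y ∈ l, R x y) : (x :: l).IsChain R :=
  h.cons fun y hy => hx y (mem_of_mem_head? hy)

theorem IsChain.append_cons {α : Type*} {R : α → α → Prop} {l₁ l₂ : List α} {x : α}
    (h₁ : l₁.IsChain R) (h₂ : l₂.IsChain R) (hl : ∀ y ∈ l₁, R y x)
    (hr : ∀ y ∈ l₂, R x y) :
    (l₁ ++ x :: l₂).IsChain R :=
  h₁.append (h₂.cons_of_forall_mem hr)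
    fun _ hy _ hx => (Option.mem_some_iff.mp hx) ▸ hl _ (mem_of_mem_getLast? hy)

end List

namespace SimpleGraph.Walk

variable {V : Type*} {G : SimpleGraph V}

theorem IsPath.cons_isCycle_of_two_le_length {u v : V} {p : G.Walk v u} (hp : p.IsPath)
    (h : G.Adj u v) (hlen : 2 ≤ p.length) : (cons h p).IsCycle :=
  isCycle_iff_isPath_tail_and_le_length.mpr
    ⟨by simpa using hp, by simp only [length_cons]; omega⟩

theorem exists_isPath_of_isChain {l : List V} (hne : l ≠ []) (hchain : l.IsChain G.Adj)
    (hnodup : l.Nodup) : ∃ (u v : V) (p : G.Walk u v), p.IsPath ∧ p.length + 1 = l.length :=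
  ⟨_, _, ofSupport l hne hchain, by simpa [isPath_def] using hnodup, by
    have := List.length_pos_iff.mpr hne; simp only [length_ofSupport]; omega⟩

theorem exists_isCycle_of_isChain {u : V} {l : List V} (hchain : (u :: l ++ [u]).IsChain G.Adj)
    (hnodup : (u :: l).Nodup) (hlen : 2 ≤ l.length) :
    ∃ (w : V) (C : G.Walk w w), C.IsCycle ∧ C.length = l.length + 1 := by
  obtain ⟨hpath, -, hclose⟩ := List.isChain_append.mp hchain
  have hne : u :: l ≠ [] := List.cons_ne_nil u l
  have hadj : G.Adj ((u :: l).getLast hne) u := hclose _ (List.getLast?_eq_some_getLast hne) _ rfl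
  let p : G.Walk u ((u :: l).getLast hne) := ofSupport (u :: l) hne hpath
  have hsupp : p.support = u :: l := support_ofSupport hne hpath
  have hp : p.IsPath := (isPath_def p).mpr (hsupp.symm ▸ hnodup)
  have hplen : p.length = l.length := by simpa using length_ofSupport (G := G) hne hpath
  exact ⟨_, cons hadj p, hp.cons_isCycle_of_two_le_length hadj (by omega), by simp [hplen]⟩

theorem IsCycle.length_le_card_of_forall_mem [DecidableEq V] {u : V} {C : G.Walk u u}
    (hC : C.IsCycle) {s : Finset V} (hs : ∀ w ∈ C.support, w ∈ s) : C.length ≤ s.card := by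
  have hlen : C.support.tail.length = C.length := by simp
  rw [← hlen, ← List.toFinset_card_of_nodup hC.support_nodup]
  exact Finset.card_le_card fun w hw => hs w (List.mem_of_mem_tail (List.mem_toFinset.mp hw))

theorem IsCycle.dart_eq_of_snd_eq {u : V} {C : G.Walk u u} (hC : C.IsCycle) {d d' : G.Dart}
    (hd : d ∈ C.darts) (hd' : d' ∈ C.darts) (h : d.snd = d'.snd) : d = d' :=
  List.inj_on_of_nodup_map (by rw [map_snd_darts]; exact hC.support_nodup) hd hd' h

theorem exists_boundary_dart_of_closed {u : V} (C : G.Walk u u) (S : Set V)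
    (hin : ∃ w ∈ C.support, w ∈ S) (hout : ∃ w ∈ C.support, w ∉ S) :
    ∃ d ∈ C.darts, d.fst ∈ S ∧ d.snd ∉ S := by
  classical
  by_cases hu : u ∈ S
  · obtain ⟨w, hw, hwS⟩ := hout
    obtain ⟨d, hd, h⟩ := (C.takeUntil w hw).exists_boundary_dart S hu hwS
    exact ⟨d, C.darts_takeUntil_subset_darts hw hd, h⟩
  · obtain ⟨w, hw, hwS⟩ := hin
    obtain ⟨d, hd, h⟩ := (C.dropUntil w hw).exists_boundary_dart S hwS hu
    exact ⟨d, C.darts_dropUntil_subset_darts hw hd, h⟩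

end SimpleGraph.Walk

section graphJoin

variable {α β : Type*} {A : SimpleGraph α} {B : SimpleGraph β}

@[simp] theorem graphJoin_adj_inl_inl {a a' : α} :
    (graphJoin A B).Adj (.inl a) (.inl a') ↔ A.Adj a a' := Iff.rfl

@[simp] theorem graphJoin_adj_inr_inr {b b' : β} :
    (graphJoin A B).Adj (.inr b) (.inr b') ↔ B.Adj b b' := Iff.rfl

@[simp] theorem graphJoin_adj_inl_inr (a : α) (b : β) : (graphJoin A B).Adj (.inl a) (.inr b) :=
  trivial

@[simp] theorem graphJoin_adj_inr_inl (b : β) (a : α) : (graphJoin A B).Adj (.inr b) (.inl a) :=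
  trivial

variable [Fintype α] [Fintype β] [DecidableRel (graphJoin A B).Adj]

theorem degree_graphJoin_inl [DecidableRel A.Adj] (a : α) :
    (graphJoin A B).degree (.inl a) = A.degree a + Fintype.card β := by
  have : (graphJoin A B).neighborFinset (.inl a) = (A.neighborFinset a).disjSum Finset.univ := by
    ext (a' | b) <;> simp
  rw [← card_neighborFinset_eq_degree, this, Finset.card_disjSum, card_neighborFinset_eq_degree,
    Finset.card_univ]

theorem degree_graphJoin_inr [DecidableRel B.Adj] (b : β) :
    (graphJoin A B).degree (.inr b) = Fintype.card α + B.degree b := by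
  have : (graphJoin A B).neighborFinset (.inr b) = Finset.univ.disjSum (B.neighborFinset b) := by
    ext (a | b') <;> simp
  rw [← card_neighborFinset_eq_degree, this, Finset.card_disjSum, card_neighborFinset_eq_degree,
    Finset.card_univ]

end graphJoin

@[simp] theorem threeCliques_adj {k : ℕ} {u v : Fin 3 × Fin k} :
    (threeCliques k).Adj u v ↔ u.1 = v.1 ∧ u.2 ≠ v.2 := Iff.rfl

theorem degree_threeCliques {k : ℕ} [DecidableRel (threeCliques k).Adj] (u : Fin 3 × Fin k) :
    (threeCliques k).degree u = k - 1 := by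
  have : (threeCliques k).neighborFinset u = ({u.1} : Finset _) ×ˢ ({u.2}ᶜ : Finset _) := by
    ext ⟨i, a⟩
    simp [eq_comm, and_comm]
  rw [← card_neighborFinset_eq_degree, this, Finset.card_product, Finset.card_compl]
  simp

abbrev k2JoinThreeCliques (k : ℕ) : SimpleGraph (Fin 2 ⊕ Fin 3 × Fin k) :=
  graphJoin (⊤ : SimpleGraph (Fin 2)) (threeCliques k)

namespace k2JoinThreeCliques

theorem minDegree_eq {k : ℕ} (hk : 1 ≤ k)
    [DecidableRel (k2JoinThreeCliques k).Adj] : (k2JoinThreeCliques k).minDegree = k + 1 := by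
  classical
  have hinr : ∀ u, (k2JoinThreeCliques k).degree (.inr u) = k + 1 := fun u => by
    rw [degree_graphJoin_inr, degree_threeCliques]
    simp only [Fintype.card_fin]
    omega
  refine le_antisymm (hinr (0, ⟨0, hk⟩) ▸ minDegree_le_degree _ _) ?_
  refine le_minDegree_of_forall_le_degree _ _ ?_
  rintro (x | u)
  · rw [degree_graphJoin_inl]
    simp only [Fintype.card_prod, Fintype.card_fin]
    omega
  · exact (hinr u).ge

def cliqueList (k : ℕ) (i : Fin 3) : List (Fin 2 ⊕ Fin 3 × Fin k) :=
  (List.finRange k).map fun a => .inr (i, a)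

@[simp] theorem mem_cliqueList {k : ℕ} {i : Fin 3} {w : Fin 2 ⊕ Fin 3 × Fin k} :
    w ∈ cliqueList k i ↔ ∃ a, .inr (i, a) = w := by
  simp [cliqueList]

@[simp] theorem length_cliqueList (k : ℕ) (i : Fin 3) : (cliqueList k i).length = k := by
  simp [cliqueList]

theorem nodup_cliqueList (k : ℕ) (i : Fin 3) : (cliqueList k i).Nodup :=
  (List.nodup_finRange k).map fun _ _ h => (Prod.ext_iff.mp (Sum.inr_injective h)).2

theorem isChain_cliqueList (k : ℕ) (i : Fin 3) :
    (cliqueList k i).IsChain (k2JoinThreeCliques k).Adj :=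
  (List.pairwise_map.mpr ((List.nodup_finRange k).imp fun h => by simpa using h)).isChain

theorem exists_isPath_length (k : ℕ) :
    ∃ (u v : Fin 2 ⊕ Fin 3 × Fin k) (P : (k2JoinThreeCliques k).Walk u v),
      P.IsPath ∧ P.length + 1 = 3 * k + 2 := by
  set l := cliqueList k 0 ++ .inl 0 :: (cliqueList k 1 ++ .inl 1 :: cliqueList k 2)
  have hchain : l.IsChain (k2JoinThreeCliques k).Adj :=
    (isChain_cliqueList k 0).append_cons
      ((isChain_cliqueList k 1).append_cons (isChain_cliqueList k 2) (by simp) (by simp))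
      (by simp) (by simp)
  have hnodup : l.Nodup := by
    simp [l, List.nodup_append, nodup_cliqueList, Fin.forall_fin_succ]
  have hl : l.length = 3 * k + 2 := by
    simp only [l, List.length_append, length_cliqueList, List.length_cons]; omega
  obtain ⟨u, v, P, hP, hlen⟩ :=
    Walk.exists_isPath_of_isChain (List.ne_nil_of_length_pos (by omega)) hchain hnodup
  exact ⟨u, v, P, hP, hlen.trans hl⟩

theorem exists_isCycle_length {k : ℕ} (hk : 1 ≤ k) :
    ∃ (u : Fin 2 ⊕ Fin 3 × Fin k) (C : (k2JoinThreeCliques k).Walk u u),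
      C.IsCycle ∧ C.length = 2 * k + 2 := by
  set l := cliqueList k 0 ++ .inl 1 :: cliqueList k 1
  have hchain : (Sum.inl 0 :: l ++ [Sum.inl 0]).IsChain (k2JoinThreeCliques k).Adj := by
    have : ((Sum.inl 0 :: cliqueList k 0) ++ Sum.inl 1 :: (cliqueList k 1 ++ [Sum.inl 0])).IsChain
        (k2JoinThreeCliques k).Adj :=
      ((isChain_cliqueList k 0).cons_of_forall_mem (by simp)).append_cons
        ((isChain_cliqueList k 1).append_cons .nil (by simp) (by simp)) (by simp) (by simp)
    simpa [l] using this
  have hnodup : (Sum.inl 0 :: l).Nodup := by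
    simp [l, List.nodup_append, nodup_cliqueList]
  have hl : l.length = 2 * k + 1 := by
    simp only [l, List.length_append, length_cliqueList, List.length_cons]; omega
  obtain ⟨u, C, hC, hlen⟩ := Walk.exists_isCycle_of_isChain hchain hnodup (by omega)
  exact ⟨u, C, hC, by omega⟩

theorem exists_inl_eq_of_adj_inr {k : ℕ} {i : Fin 3} {a : Fin k} {w : Fin 2 ⊕ Fin 3 × Fin k}
    (h : (k2JoinThreeCliques k).Adj (.inr (i, a)) w) (hw : w ∉ Set.range fun b => .inr (i, b)) :
    ∃ y, w = .inl y := by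
  rcases w with y | ⟨j, b⟩
  · exact ⟨y, rfl⟩
  · obtain ⟨rfl, -⟩ := h
    exact absurd ⟨b, rfl⟩ hw

theorem length_le_of_isCycle {k : ℕ} {u : Fin 2 ⊕ Fin 3 × Fin k}
    {C : (k2JoinThreeCliques k).Walk u u} (hC : C.IsCycle) : C.length ≤ 2 * k + 2 := by
  let S (i : Fin 3) : Set (Fin 2 ⊕ Fin 3 × Fin k) := Set.range fun b => .inr (i, b)
  have hS {i j : Fin 3} {w} (hi : w ∈ S i) (hj : w ∈ S j) : i = j := by
    obtain ⟨a, rfl⟩ := hi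
    obtain ⟨b, hb⟩ := hj
    exact (congrArg Prod.fst (Sum.inr_injective hb)).symm
  by_cases hmeet : ∀ i, ∃ w ∈ C.support, w ∈ S i
  · exfalso
    have hexit (i : Fin 3) : ∃ d ∈ C.darts, d.fst ∈ S i ∧ ∃ y, d.snd = .inl y := by
      obtain ⟨w, hw, hwS⟩ := hmeet (i + 1)
      obtain ⟨d, hd, ⟨a, ha⟩, hsnd⟩ := C.exists_boundary_dart_of_closed (S i) (hmeet i)
        ⟨w, hw, fun hwi => by simpa using hS hwi hwS⟩
      exact ⟨d, hd, ⟨a, ha⟩, exists_inl_eq_of_adj_inr (ha ▸ d.adj) hsnd⟩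
    choose d hd hfst y hy using hexit
    have hinj : Function.Injective y := fun i j hij =>
      hS (hfst i) (hC.dart_eq_of_snd_eq (hd i) (hd j) (by rw [hy, hy, hij]) ▸ hfst j)
    simpa using Fintype.card_le_of_injective y hinj
  · push Not at hmeet
    obtain ⟨i, hi⟩ := hmeet
    calc C.length ≤ (Finset.univ.disjSum ((Finset.univ.erase i) ×ˢ Finset.univ)).card := by
          refine hC.length_le_card_of_forall_mem ?_
          rintro (x | ⟨j, a⟩) hw
          · simp
          · simp only [Finset.inr_mem_disjSum, Finset.mem_product, Finset.mem_erase]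
            exact ⟨⟨fun hji => hi _ hw ⟨a, by rw [hji]⟩, Finset.mem_univ _⟩,
              Finset.mem_univ _⟩
      _ = 2 * k + 2 := by simp [Finset.card_disjSum, Finset.card_product]; ring

end k2JoinThreeCliques

/-- For every integer `δ ≥ 2`, the graph `K₂ + 3K_{δ−1}`
(the join of `K₂` with the disjoint union of three copies of `K_{δ−1}`)
has `n = 3δ − 1` vertices, minimum degree `δ`, contains a Hamilton path
(so `p = n = 3δ − 1`), and has circumference `c = 2δ`. -/
theorem stmt_10 (δ : ℕ) (hδ : 2 ≤ δ) :
    Fintype.card (Fin 2 ⊕ Fin 3 × Fin (δ - 1)) = 3 * δ - 1 ∧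
    @SimpleGraph.minDegree _
      (graphJoin (⊤ : SimpleGraph (Fin 2)) (threeCliques (δ - 1))) _
      (Classical.decRel _) = δ ∧
    (∃ (u v : Fin 2 ⊕ Fin 3 × Fin (δ - 1))
        (P : (graphJoin (⊤ : SimpleGraph (Fin 2)) (threeCliques (δ - 1))).Walk u v),
      P.IsPath ∧ P.length + 1 = 3 * δ - 1) ∧
    (∃ (u : Fin 2 ⊕ Fin 3 × Fin (δ - 1))
        (C : (graphJoin (⊤ : SimpleGraph (Fin 2)) (threeCliques (δ - 1))).Walk u u),
      C.IsCycle ∧ C.length = 2 * δ) ∧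
    (∀ (u : Fin 2 ⊕ Fin 3 × Fin (δ - 1))
        (C : (graphJoin (⊤ : SimpleGraph (Fin 2)) (threeCliques (δ - 1))).Walk u u),
      C.IsCycle → C.length ≤ 2 * δ) := by
  obtain ⟨k, rfl⟩ : ∃ k, δ = k + 1 := ⟨δ - 1, by omega⟩
  have hk : 1 ≤ k := by omega
  simp only [Nat.add_sub_cancel]
  refine ⟨by simp only [Fintype.card_sum, Fintype.card_fin, Fintype.card_prod]; omega,
    by classical exact k2JoinThreeCliques.minDegree_eq hk, ?_, ?_,
    fun u C hC => (k2JoinThreeCliques.length_le_of_isCycle hC).trans (by omega)⟩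
  · obtain ⟨u, v, P, hP, hlen⟩ := k2JoinThreeCliques.exists_isPath_length k
    exact ⟨u, v, P, hP, by omega⟩
  · obtain ⟨u, C, hC, hlen⟩ := k2JoinThreeCliques.exists_isCycle_length hk
    exact ⟨u, C, hC, by omega⟩
end
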